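/- Let W be a Coxeter group, J a subset of the simple reflections generating a finite parabolic subgroup W_J with longest element w_J. Then for every w ∈ W, the Demazure product w * w_J is the longest element of the coset w W_J, and w_J * w is the longest element of W_J w. -/

import Mathlib

/-!
Let `N` be an element of maximal length in `w W_J`. Every `s ∈ J` is a right descent of `N`, and
likewise of `w_J`, so the lifting property of the Bruhat order (`u ≤ N` and `N s < N` imply
`u s ≤ N`) shows `W_J ≤ w_J` and `w W_J ≤ N`. Hence every `w x` with `x ∈ W_J` lies below
`w * w_J`, in particular `N ≤ w * w_J`. Conversely `w * w_J = a b` with `a ≤ w ≤ N` and `b ≤ w_J`,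
so `b ∈ W_J` and `a b ≤ N`; thus `w * w_J = N`. The statement for `w_J * w` follows by inversion.

Transitivity and the lifting property of the subword order come from identifying it with the
order generated by `w t < w` for reflections `t` (Björner–Brenti, Thm. 2.2.2). That in turn rests
on the strong exchange condition, proved with the sign cocycle `inversionSign w t ∈ {±1}`
(Björner–Brenti, Thm. 1.4.3), obtained by lifting `s ↦ (δ_s, s)` to the semidirect product
`(W → ℤˣ) ⋊ W`: it is `-1` exactly when `t` occurs an odd number of times in the left inversion
sequence of a word for `w`.
-/

variable {B W : Type*} [Group W] {M : CoxeterMatrix B}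

/-- Bruhat order on a Coxeter group, via the subword property: `x ≤ w` iff some reduced word
for `w` has a subword whose product is `x`. -/
def CoxeterSystem.BruhatLE (cs : CoxeterSystem M W) (x w : W) : Prop :=
  ∃ ω : List B, cs.IsReduced ω ∧ cs.wordProd ω = w ∧
    ∃ ω' : List B, ω'.Sublist ω ∧ cs.wordProd ω' = x

/-- `d` is the Demazure product of `u` and `v`. -/
def CoxeterSystem.IsDemazureProd (cs : CoxeterSystem M W) (u v d : W) : Prop :=
  {x : W | ∃ a b : W, cs.BruhatLE a u ∧ cs.BruhatLE b v ∧ x = a * b} =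
    {x : W | cs.BruhatLE x d}

def precompConj (G A : Type*) [Group G] [Mul A] : G →* MulAut (G → A) where
  toFun x :=
    { toFun f r := f (x⁻¹ * r * x)
      invFun f r := f (x * r * x⁻¹)
      left_inv f := by ext; simp [mul_assoc]
      right_inv f := by ext; simp [mul_assoc]
      map_mul' _ _ := rfl }
  map_one' := by ext; simp
  map_mul' x y := by ext; simp [mul_assoc]

@[simp] theorem precompConj_apply {G A : Type*} [Group G] [Mul A] (x : G) (f : G → A) (r : G) :
    precompConj G A x f r = f (x⁻¹ * r * x) := rfl

theorem precompConj_mulSingle {G A : Type*} [Group G] [DecidableEq G] [MulOneClass A]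
    (x t : G) (a : A) :
    precompConj G A x (Pi.mulSingle t a) = Pi.mulSingle (x * t * x⁻¹) a :=
  Pi.mulSingle_comp_equiv (MulAut.conj x).symm.toEquiv t a

namespace CoxeterSystem

open List

theorem prod_map_alternatingWord_two_mul {G : Type*} [Monoid G] (f : B → G) (i j : B) (m : ℕ) :
    ((alternatingWord i j (2 * m)).map f).prod = (f i * f j) ^ m := by
  induction m with
  | zero => simp [alternatingWord]
  | succ m ih =>
    rw [show 2 * (m + 1) = 2 * m + 1 + 1 by ring, alternatingWord_succ', alternatingWord_succ',
      if_neg (Nat.not_even_two_mul_add_one m), if_pos (even_two_mul m)]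
    simp [ih, pow_succ', mul_assoc]

variable (cs : CoxeterSystem M W)

section InversionSign

open scoped Classical

theorem exists_leftInvSeq_alternatingWord_eq_append_self (i j : B) :
    ∃ L, cs.leftInvSeq (alternatingWord i j (2 * M i j)) = L ++ L := by
  set l := cs.leftInvSeq (alternatingWord i j (2 * M i j))
  refine ⟨l.take (M i j), ?_⟩
  conv_lhs => rw [← take_append_drop (M i j) l]
  congr 1
  refine ext_getElem (by simp [l]; omega) fun k hk _ => ?_
  simp only [l, length_drop, length_leftInvSeq, length_alternatingWord] at hk
  simp only [l, getElem_take, getElem_drop]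
  rw [getElem_leftInvSeq_alternatingWord _ _ _ _ _ (by omega),
    getElem_leftInvSeq_alternatingWord _ _ _ _ _ (by omega), prod_alternatingWord_eq_mul_pow,
    prod_alternatingWord_eq_mul_pow, show (2 * (M i j + k) + 1) / 2 = k + M j i by
      rw [M.symmetric]; omega, show (2 * k + 1) / 2 = k by omega, pow_add,
    simple_mul_simple_pow, mul_one]
  simp only [Nat.not_even_two_mul_add_one, if_false]

noncomputable def signedSimple (i : B) : (W → ℤˣ) ⋊[precompConj W ℤˣ] W :=
  ⟨Pi.mulSingle (cs.simple i) (-1), cs.simple i⟩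

theorem prod_map_signedSimple (ω : List B) :
    (ω.map cs.signedSimple).prod =
      ⟨((cs.leftInvSeq ω).map fun t => Pi.mulSingle t (-1)).prod, cs.wordProd ω⟩ := by
  induction ω with
  | nil => rfl
  | cons i ω ih =>
    rw [map_cons, prod_cons, ih]
    refine SemidirectProduct.ext ?_ (cs.wordProd_cons i ω).symm
    rw [SemidirectProduct.mul_left, map_list_prod, map_map]
    simp only [signedSimple, leftInvSeq, map_cons, prod_cons, map_map]
    congr 2
    refine map_congr_left fun t _ => ?_
    simp [precompConj_mulSingle, cs.inv_simple]

theorem signedSimple_isLiftable : M.IsLiftable cs.signedSimple := by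
  intro i j
  rw [← prod_map_alternatingWord_two_mul, prod_map_signedSimple]
  obtain ⟨L, hL⟩ := cs.exists_leftInvSeq_alternatingWord_eq_append_self i j
  refine SemidirectProduct.ext ?_ ?_
  · ext r
    simp [hL, Int.units_mul_self]
  · simp [prod_alternatingWord_eq_mul_pow]

noncomputable def signCocycle : W →* (W → ℤˣ) ⋊[precompConj W ℤˣ] W :=
  cs.lift ⟨cs.signedSimple, cs.signedSimple_isLiftable⟩

noncomputable def inversionSign (w : W) : W → ℤˣ := (cs.signCocycle w).left

theorem signCocycle_wordProd (ω : List B) :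
    cs.signCocycle (cs.wordProd ω) =
      ⟨((cs.leftInvSeq ω).map fun t => Pi.mulSingle t (-1)).prod, cs.wordProd ω⟩ := by
  rw [← prod_map_signedSimple, wordProd, map_list_prod, map_map]
  congr 2
  ext1 i
  exact cs.lift_apply_simple cs.signedSimple_isLiftable i

theorem signCocycle_right (w : W) : (cs.signCocycle w).right = w := by
  obtain ⟨ω, rfl⟩ := cs.wordProd_surjective w
  rw [signCocycle_wordProd]

theorem inversionSign_mul (x y r : W) :
    cs.inversionSign (x * y) r = cs.inversionSign x r * cs.inversionSign y (x⁻¹ * r * x) := by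
  simp [inversionSign, signCocycle_right]

theorem inversionSign_wordProd_of_not_mem {ω : List B} {t : W} (ht : t ∉ cs.leftInvSeq ω) :
    cs.inversionSign (cs.wordProd ω) t = 1 := by
  rw [inversionSign, signCocycle_wordProd]
  dsimp only
  rw [Pi.list_prod_apply, map_map]
  refine prod_eq_one fun u hu => ?_
  obtain ⟨t', ht', rfl⟩ := mem_map.mp hu
  exact Pi.mulSingle_eq_of_ne (ne_of_mem_of_not_mem ht' ht).symm _

theorem inversionSign_one : cs.inversionSign 1 = 1 :=
  congrArg SemidirectProduct.left (map_one cs.signCocycle)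

theorem inversionSign_simple_self (i : B) : cs.inversionSign (cs.simple i) (cs.simple i) = -1 := by
  rw [← cs.wordProd_singleton i, inversionSign, signCocycle_wordProd]
  simp

theorem inversionSign_self {t : W} (ht : cs.IsReflection t) : cs.inversionSign t t = -1 := by
  obtain ⟨u, i, rfl⟩ := ht
  -- The cocycle identity splits the sign of `t = u s u⁻¹` at `t` into the sign of `s` at `s`
  -- and two factors whose product is the sign of `u * u⁻¹ = 1`.
  set t := u * cs.simple i * u⁻¹
  have hconj : u⁻¹ * t * u = cs.simple i := by simp [t, mul_assoc]
  have hinv := cs.inversionSign_mul u u⁻¹ t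
  rw [mul_inv_cancel, inversionSign_one, hconj] at hinv
  have hsplit := cs.inversionSign_mul u (cs.simple i * u⁻¹) t
  rw [← mul_assoc u, hconj, cs.inversionSign_mul (cs.simple i), inv_mul_cancel, one_mul] at hsplit
  rw [hsplit, mul_left_comm, ← hinv, inversionSign_simple_self, Pi.one_apply, mul_one]

theorem inversionSign_of_isLeftInversion {w t : W} (h : cs.IsLeftInversion w t) :
    cs.inversionSign w t = -1 := by
  obtain ⟨ht, hlt⟩ := h
  refine (Int.units_eq_one_or _).resolve_left fun hw => ?_
  obtain ⟨τ, hτ, hτw⟩ := cs.exists_isReduced (t * w)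
  have hmem : t ∈ cs.leftInvSeq τ := by
    by_contra hn
    have h := cs.inversionSign_mul t w t
    rw [inversionSign_self cs ht, inv_mul_cancel, one_mul, hw, mul_one, hτw,
      inversionSign_wordProd_of_not_mem cs hn] at h
    exact absurd h (by decide)
  have := (cs.isLeftInversion_of_mem_leftInvSeq hτ hmem).2
  rw [← hτw, ← mul_assoc, ht.mul_self, one_mul] at this
  omega

theorem mem_leftInvSeq_of_isLeftInversion {ω : List B} {t : W}
    (h : cs.IsLeftInversion (cs.wordProd ω) t) : t ∈ cs.leftInvSeq ω := by
  by_contra hn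
  have := cs.inversionSign_of_isLeftInversion h
  rw [inversionSign_wordProd_of_not_mem cs hn] at this
  exact absurd this (by decide)

theorem mem_rightInvSeq_of_isRightInversion {ω : List B} {t : W}
    (h : cs.IsRightInversion (cs.wordProd ω) t) : t ∈ cs.rightInvSeq ω := by
  have : t ∈ cs.leftInvSeq ω.reverse :=
    cs.mem_leftInvSeq_of_isLeftInversion (by rwa [wordProd_reverse, isLeftInversion_inv_iff])
  rwa [leftInvSeq_reverse, mem_reverse] at this

theorem exists_eraseIdx_of_isRightInversion {ω : List B} {t : W}
    (h : cs.IsRightInversion (cs.wordProd ω) t) :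
    ∃ j < ω.length, cs.wordProd ω * t = cs.wordProd (ω.eraseIdx j) := by
  obtain ⟨j, hj, rfl⟩ := mem_iff_getElem.mp (cs.mem_rightInvSeq_of_isRightInversion h)
  refine ⟨j, by simpa using hj, ?_⟩
  rw [← getD_eq_getElem _ 1 hj, wordProd_mul_getD_rightInvSeq]

end InversionSign

def ChainLE (x w : W) : Prop :=
  Relation.ReflTransGen (fun a b => ∃ t, cs.IsRightInversion a t ∧ a * t = b) w x

variable {cs}

theorem ChainLE.refl (x : W) : cs.ChainLE x x := Relation.ReflTransGen.refl

theorem ChainLE.trans {x y z : W} (hxy : cs.ChainLE x y) (hyz : cs.ChainLE y z) : cs.ChainLE x z :=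
  Relation.ReflTransGen.trans hyz hxy

theorem chainLE_mul_of_isRightInversion {w t : W} (h : cs.IsRightInversion w t) :
    cs.ChainLE (w * t) w :=
  .single ⟨t, h, rfl⟩

theorem chainLE_mul_simple {w : W} {i : B} (h : cs.length w < cs.length (w * cs.simple i)) :
    cs.ChainLE w (w * cs.simple i) := by
  simpa using chainLE_mul_of_isRightInversion (w := w * cs.simple i)
    ⟨cs.isReflection_simple i, by rwa [simple_mul_simple_cancel_right]⟩

theorem ChainLE.exists_sublist {x w : W} (h : cs.ChainLE x w) {σ : List B}
    (hσ : cs.wordProd σ = w) : ∃ τ, τ <+ σ ∧ cs.wordProd τ = x := by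
  induction h using Relation.ReflTransGen.head_induction_on generalizing σ with
  | refl => exact ⟨σ, .refl σ, hσ⟩
  | head hstep _ ih =>
    obtain ⟨t, ht, rfl⟩ := hstep
    subst hσ
    obtain ⟨j, -, hj⟩ := cs.exists_eraseIdx_of_isRightInversion ht
    obtain ⟨τ, hτ, rfl⟩ := ih hj.symm
    exact ⟨τ, hτ.trans (eraseIdx_sublist σ j), rfl⟩

theorem chainLE_or_of_isRightInversion {u t : W} (ht : cs.IsRightInversion u t) (i : B) :
    cs.ChainLE (u * t * cs.simple i) u ∨ cs.ChainLE (u * t * cs.simple i) (u * cs.simple i) := by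
  set s := cs.simple i
  have hconj : u * t * s = u * s * (s * t * s) := by simp [s, mul_assoc]
  have ht' : cs.IsReflection (s * t * s) := by simpa [s] using ht.1.conj s
  rcases (ht'.length_mul_left_ne (u * s)).lt_or_gt with hlt | hgt
  · exact .inr (hconj ▸ chainLE_mul_of_isRightInversion ⟨ht', hlt⟩)
  rw [← hconj] at hgt
  suffices u * t * s = u from .inl (by rw [this]; exact .refl u)
  -- Exchange `t` in a reduced word for `u` ending in `s`: deleting any letter but the last one
  -- would make `u * t * s` shorter than `u * s`.
  obtain ⟨τ, hτ, hτu⟩ := cs.exists_isReduced (u * s)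
  have hu : cs.wordProd (τ ++ [i]) = u := by simp [wordProd_append, ← hτu, s]
  obtain ⟨j, hj, hut⟩ := cs.exists_eraseIdx_of_isRightInversion (hu ▸ ht)
  rw [hu] at hut
  rcases Nat.lt_succ_iff_lt_or_eq.mp (show j < τ.length + 1 by simpa using hj) with hjτ | rfl
  · rw [eraseIdx_append_of_lt_length hjτ, wordProd_append, wordProd_singleton] at hut
    have : cs.length (u * t * s) < cs.length (u * s) :=
      calc cs.length (u * t * s) = cs.length (cs.wordProd (τ.eraseIdx j)) := by
            rw [hut, simple_mul_simple_cancel_right]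
        _ ≤ (τ.eraseIdx j).length := cs.length_wordProd_le _
        _ < τ.length := by rw [length_eraseIdx_of_lt hjτ]; omega
        _ = cs.length (u * s) := by rw [hτu, hτ.eq]
    exact absurd hgt this.not_gt
  · rw [eraseIdx_append_of_length_le le_rfl, Nat.sub_self, eraseIdx_cons_zero, append_nil] at hut
    rw [hut, ← hτu, simple_mul_simple_cancel_right]

theorem ChainLE.mul_simple_or {x w : W} (h : cs.ChainLE x w) (i : B) :
    cs.ChainLE (x * cs.simple i) w ∨ cs.ChainLE (x * cs.simple i) (w * cs.simple i) := by
  induction h with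
  | refl => exact .inr (.refl _)
  | tail _ hstep ih =>
    obtain ⟨t, ht, rfl⟩ := hstep
    rcases chainLE_or_of_isRightInversion ht i with h | h
    · exact .inl (h.trans ‹_›)
    · exact ih.imp h.trans h.trans

theorem ChainLE.mul_simple_of_length_lt {x w : W} {i : B} (h : cs.ChainLE x w)
    (hw : cs.length w < cs.length (w * cs.simple i)) :
    cs.ChainLE (x * cs.simple i) (w * cs.simple i) :=
  (h.mul_simple_or i).elim (fun h' => h'.trans (chainLE_mul_simple hw)) id

theorem chainLE_wordProd_of_sublist {ω τ : List B} (hω : cs.IsReduced ω) (h : τ <+ ω) :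
    cs.ChainLE (cs.wordProd τ) (cs.wordProd ω) := by
  induction ω using List.reverseRecOn generalizing τ with
  | nil => rw [sublist_nil.mp h]; exact .refl _
  | append_singleton α i ih =>
    have hα : cs.IsReduced α := by simpa using hω.take α.length
    have hlt : cs.length (cs.wordProd α) < cs.length (cs.wordProd α * cs.simple i) := by
      have := hω.eq
      have := hα.eq
      simp only [wordProd_append, wordProd_singleton, length_append, length_singleton] at *
      omega
    obtain ⟨τ₁, τ₂, rfl, h₁, h₂⟩ := sublist_append_iff.mp h
    rcases sublist_singleton.mp h₂ with rfl | rfl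
    · simpa [wordProd_append] using (ih hα h₁).trans (chainLE_mul_simple hlt)
    · simpa [wordProd_append] using (ih hα h₁).mul_simple_of_length_lt hlt

theorem bruhatLE_iff_chainLE {x w : W} : cs.BruhatLE x w ↔ cs.ChainLE x w := by
  constructor
  · rintro ⟨ω, hω, rfl, τ, hτ, rfl⟩
    exact chainLE_wordProd_of_sublist hω hτ
  · intro h
    obtain ⟨ω, hω, rfl⟩ := cs.exists_isReduced w
    obtain ⟨τ, hτ, hτx⟩ := h.exists_sublist rfl
    exact ⟨ω, hω, rfl, τ, hτ, hτx⟩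

variable (cs) in
theorem one_bruhatLE (w : W) : cs.BruhatLE 1 w := by
  obtain ⟨ω, hω, rfl⟩ := cs.exists_isReduced w
  exact ⟨ω, hω, rfl, [], nil_sublist ω, wordProd_nil cs⟩

variable (cs) in
theorem bruhatLE_refl (w : W) : cs.BruhatLE w w := by
  obtain ⟨ω, hω, rfl⟩ := cs.exists_isReduced w
  exact ⟨ω, hω, rfl, ω, .refl ω, rfl⟩

theorem BruhatLE.trans {x y z : W} (hxy : cs.BruhatLE x y) (hyz : cs.BruhatLE y z) :
    cs.BruhatLE x z :=
  bruhatLE_iff_chainLE.mpr ((bruhatLE_iff_chainLE.mp hxy).trans (bruhatLE_iff_chainLE.mp hyz))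

theorem BruhatLE.exists_sublist {x w : W} (h : cs.BruhatLE x w) {σ : List B}
    (hσ : cs.wordProd σ = w) : ∃ τ, τ <+ σ ∧ cs.wordProd τ = x :=
  (bruhatLE_iff_chainLE.mp h).exists_sublist hσ

theorem BruhatLE.length_le {x w : W} (h : cs.BruhatLE x w) : cs.length x ≤ cs.length w := by
  obtain ⟨ω, hω, rfl, τ, hτ, rfl⟩ := h
  exact (cs.length_wordProd_le τ).trans (hω.eq ▸ hτ.length_le)

theorem BruhatLE.antisymm {x w : W} (hxw : cs.BruhatLE x w) (hwx : cs.BruhatLE w x) : x = w := by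
  obtain ⟨ω, hω, rfl, τ, hτ, rfl⟩ := hxw
  have := hwx.length_le
  rw [hτ.eq_of_length_le (hω.eq ▸ this.trans (cs.length_wordProd_le τ))]

theorem BruhatLE.inv {x w : W} (h : cs.BruhatLE x w) : cs.BruhatLE x⁻¹ w⁻¹ := by
  obtain ⟨ω, hω, rfl, τ, hτ, rfl⟩ := h
  exact ⟨ω.reverse, hω.reverse, wordProd_reverse cs ω, τ.reverse, hτ.reverse,
    wordProd_reverse cs τ⟩

theorem bruhatLE_inv_iff {x w : W} : cs.BruhatLE x⁻¹ w⁻¹ ↔ cs.BruhatLE x w :=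
  ⟨fun h => by simpa using h.inv, BruhatLE.inv⟩

theorem BruhatLE.mul_simple_of_isRightDescent {u w : W} {i : B} (h : cs.BruhatLE u w)
    (hw : cs.IsRightDescent w i) : cs.BruhatLE (u * cs.simple i) w := by
  rw [bruhatLE_iff_chainLE] at h ⊢
  exact (h.mul_simple_or i).elim id
    (·.trans (chainLE_mul_of_isRightInversion ⟨cs.isReflection_simple i, hw⟩))

theorem IsDemazureProd.inv {u v d : W} (h : cs.IsDemazureProd u v d) :
    cs.IsDemazureProd v⁻¹ u⁻¹ d⁻¹ := by
  ext x
  calc (∃ a b, cs.BruhatLE a v⁻¹ ∧ cs.BruhatLE b u⁻¹ ∧ x = a * b)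
      ↔ ∃ a b, cs.BruhatLE a u ∧ cs.BruhatLE b v ∧ x⁻¹ = a * b := by
        constructor
        · rintro ⟨a, b, ha, hb, rfl⟩
          exact ⟨b⁻¹, a⁻¹, by simpa using hb.inv, by simpa using ha.inv, by group⟩
        · rintro ⟨a, b, ha, hb, hx⟩
          exact ⟨b⁻¹, a⁻¹, hb.inv, ha.inv, by rw [← mul_inv_rev, ← hx, inv_inv]⟩
    _ ↔ cs.BruhatLE x⁻¹ d := Set.ext_iff.mp h x⁻¹
    _ ↔ cs.BruhatLE x d⁻¹ := by rw [← bruhatLE_inv_iff, inv_inv]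

variable {J : Set B}

variable (cs) in
theorem wordProd_mem_closure {μ : List B} (hμ : ∀ i ∈ μ, i ∈ J) :
    cs.wordProd μ ∈ Subgroup.closure (cs.simple '' J) := by
  refine Subgroup.list_prod_mem _ fun x hx => ?_
  obtain ⟨i, hi, rfl⟩ := mem_map.mp hx
  exact Subgroup.subset_closure (Set.mem_image_of_mem _ (hμ i hi))

theorem exists_wordProd_eq_of_mem_closure {x : W} (hx : x ∈ Subgroup.closure (cs.simple '' J)) :
    ∃ μ : List B, (∀ i ∈ μ, i ∈ J) ∧ cs.wordProd μ = x := by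
  induction hx using Subgroup.closure_induction_right with
  | one => exact ⟨[], by simp, wordProd_nil cs⟩
  | mul_right x _ y hy ih | mul_inv_cancel x _ y hy ih =>
    obtain ⟨μ, hμ, rfl⟩ := ih
    obtain ⟨j, hj, rfl⟩ := hy
    refine ⟨μ ++ [j], fun i hi => ?_, by simp [wordProd_append, inv_simple]⟩
    rcases mem_append.mp hi with hi | hi
    exacts [hμ i hi, (mem_singleton.mp hi).symm ▸ hj]

theorem BruhatLE.mem_closure {x w : W} (h : cs.BruhatLE x w)
    (hw : w ∈ Subgroup.closure (cs.simple '' J)) : x ∈ Subgroup.closure (cs.simple '' J) := by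
  obtain ⟨μ, hμ, rfl⟩ := cs.exists_wordProd_eq_of_mem_closure hw
  obtain ⟨τ, hτ, rfl⟩ := h.exists_sublist rfl
  exact cs.wordProd_mem_closure fun i hi => hμ i (hτ.subset hi)

theorem BruhatLE.mul_mem_closure {u N x : W} (hu : cs.BruhatLE u N)
    (hN : ∀ j ∈ J, cs.IsRightDescent N j) (hx : x ∈ Subgroup.closure (cs.simple '' J)) :
    cs.BruhatLE (u * x) N := by
  induction hx using Subgroup.closure_induction_right with
  | one => simpa using hu
  | mul_right x _ y hy ih | mul_inv_cancel x _ y hy ih =>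
    obtain ⟨j, hj, rfl⟩ := hy
    simpa [← mul_assoc, inv_simple] using ih.mul_simple_of_isRightDescent (hN j hj)

theorem isRightDescent_of_forall_length_mul_le {N : W}
    (hN : ∀ x ∈ Subgroup.closure (cs.simple '' J), cs.length (N * x) ≤ cs.length N) {j : B}
    (hj : j ∈ J) : cs.IsRightDescent N j :=
  (hN _ (Subgroup.subset_closure (Set.mem_image_of_mem _ hj))).lt_of_ne
    (cs.length_mul_simple_ne N j)

variable (cs) in
theorem exists_forall_length_mul_le (H : Subgroup W) (w : W) {n : ℕ}
    (hH : ∀ x ∈ H, cs.length x ≤ n) :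
    ∃ x₀ ∈ H, ∀ x ∈ H, cs.length (w * x) ≤ cs.length (w * x₀) := by
  set S := (fun x => cs.length (w * x)) '' H
  have hbdd : BddAbove S := by
    refine ⟨cs.length w + n, ?_⟩
    rintro _ ⟨x, hx, rfl⟩
    exact (cs.length_mul_le w x).trans (by linarith [hH x hx])
  obtain ⟨x₀, hx₀, hmax⟩ := Nat.sSup_mem (s := S) ⟨_, 1, H.one_mem, rfl⟩ hbdd
  exact ⟨x₀, hx₀, fun x hx => (le_csSup hbdd ⟨x, hx, rfl⟩).trans_eq hmax.symm⟩

theorem IsDemazureProd.longest_in_leftCoset {w wJ d : W}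
    (hwJ : wJ ∈ Subgroup.closure (cs.simple '' J))
    (hlongest : ∀ x ∈ Subgroup.closure (cs.simple '' J), cs.length x ≤ cs.length wJ)
    (hd : cs.IsDemazureProd w wJ d) :
    (∃ x ∈ Subgroup.closure (cs.simple '' J), d = w * x) ∧
      ∀ y : W, (∃ x ∈ Subgroup.closure (cs.simple '' J), y = w * x) →
        cs.length y ≤ cs.length d := by
  set K := Subgroup.closure (cs.simple '' J)
  have hdemazure (x : W) := Set.ext_iff.mp hd x
  obtain ⟨x₀, hx₀, hmax⟩ := cs.exists_forall_length_mul_le K w hlongest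
  have hdesc_wJ : ∀ j ∈ J, cs.IsRightDescent wJ j :=
    fun j => cs.isRightDescent_of_forall_length_mul_le fun x hx => hlongest _ (K.mul_mem hwJ hx)
  have hdesc_N : ∀ j ∈ J, cs.IsRightDescent (w * x₀) j :=
    fun j => cs.isRightDescent_of_forall_length_mul_le fun x hx => by
      simpa [mul_assoc] using hmax _ (K.mul_mem hx₀ hx)
  have hcoset_le : ∀ x ∈ K, cs.BruhatLE (w * x) d := fun x hx =>
    (hdemazure _).mp ⟨w, x, cs.bruhatLE_refl w,
      by simpa using (cs.one_bruhatLE wJ).mul_mem_closure hdesc_wJ hx, rfl⟩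
  have hd_le : cs.BruhatLE d (w * x₀) := by
    obtain ⟨a, b, ha, hb, rfl⟩ := (hdemazure d).mpr (cs.bruhatLE_refl d)
    have hw : cs.BruhatLE w (w * x₀) := by
      simpa using (cs.bruhatLE_refl (w * x₀)).mul_mem_closure hdesc_N (K.inv_mem hx₀)
    exact (ha.trans hw).mul_mem_closure hdesc_N (hb.mem_closure hwJ)
  refine ⟨⟨x₀, hx₀, hd_le.antisymm (hcoset_le x₀ hx₀)⟩, ?_⟩
  rintro y ⟨x, hx, rfl⟩
  exact (hcoset_le x hx).length_le

end CoxeterSystem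

theorem demazure_longest_in_coset_general (cs : CoxeterSystem M W) (J : Set B)
    (wJ : W) (hwJ : wJ ∈ Subgroup.closure (cs.simple '' J))
    (hlongest : ∀ x ∈ Subgroup.closure (cs.simple '' J), cs.length x ≤ cs.length wJ)
    (w : W) :
    (∀ d : W, cs.IsDemazureProd w wJ d →
      (∃ x ∈ Subgroup.closure (cs.simple '' J), d = w * x) ∧
      ∀ y : W, (∃ x ∈ Subgroup.closure (cs.simple '' J), y = w * x) →
        cs.length y ≤ cs.length d) ∧
    (∀ e : W, cs.IsDemazureProd wJ w e →
      (∃ x ∈ Subgroup.closure (cs.simple '' J), e = x * w) ∧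
      ∀ y : W, (∃ x ∈ Subgroup.closure (cs.simple '' J), y = x * w) →
        cs.length y ≤ cs.length e) := by
  refine ⟨fun d hd => hd.longest_in_leftCoset hwJ hlongest, fun e he => ?_⟩
  obtain ⟨⟨x, hx, hex⟩, hmax⟩ := he.inv.longest_in_leftCoset (inv_mem hwJ)
    (by simpa only [cs.length_inv] using hlongest)
  refine ⟨⟨x⁻¹, inv_mem hx, by rw [← inv_inv e, hex, mul_inv_rev, inv_inv]⟩, ?_⟩
  rintro y ⟨x', hx', rfl⟩
  have := hmax (x' * w)⁻¹ ⟨x'⁻¹, inv_mem hx', mul_inv_rev _ _⟩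
  rwa [cs.length_inv, cs.length_inv] at this

/-- Let `W` be a Coxeter group, `J` a subset of the simple reflections
generating a finite parabolic subgroup `W_J` with longest element `w_J`.  Then for every
`w ∈ W`, the Demazure product `w * w_J` is the longest element of the coset `w·W_J`, and
`w_J * w` is the longest element of `W_J·w`. -/
theorem demazure_longest_in_coset (cs : CoxeterSystem M W) (J : Set B)
    (hfin : (Subgroup.closure (cs.simple '' J) : Set W).Finite)
    (wJ : W) (hwJ : wJ ∈ Subgroup.closure (cs.simple '' J))
    (hlongest : ∀ x ∈ Subgroup.closure (cs.simple '' J), cs.length x ≤ cs.length wJ)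
    (w : W) :
    (∀ d : W, cs.IsDemazureProd w wJ d →
      (∃ x ∈ Subgroup.closure (cs.simple '' J), d = w * x) ∧
      ∀ y : W, (∃ x ∈ Subgroup.closure (cs.simple '' J), y = w * x) →
        cs.length y ≤ cs.length d) ∧
    (∀ e : W, cs.IsDemazureProd wJ w e →
      (∃ x ∈ Subgroup.closure (cs.simple '' J), e = x * w) ∧
      ∀ y : W, (∃ x ∈ Subgroup.closure (cs.simple '' J), y = x * w) →
        cs.length y ≤ cs.length e) :=
  demazure_longest_in_coset_general cs J wJ hwJ hlongest w
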